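/- Let k ≥ 1 and let f: {-1,1}^n → ℝ satisfy f̂(S) = 0 for all |S| < k. Then (1 - e^{-2})·E f² ≤ 2·∑_{i=1}^n ∫_0^{1/k} ‖D_i f‖²_{1+e^{-2t}} dt, where D_i f(x) = [f(x) - f(x with i-th coordinate flipped)]/2. -/

import Mathlib

open MeasureTheory

/-- Expectation with respect to the uniform measure on `{-1,1}^n` (modeled by `Fin n → Bool`). -/
noncomputable def cubeE (n : ℕ) (f : (Fin n → Bool) → ℝ) : ℝ := (∑ x, f x) / 2 ^ n

/-- Fourier coefficient `f̂(S) = E[f · W_S]`. -/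
noncomputable def cubeCoeff (n : ℕ) (f : (Fin n → Bool) → ℝ) (S : Finset (Fin n)) : ℝ :=
  cubeE n fun x => f x * ∏ i ∈ S, (if x i then (1 : ℝ) else -1)

/-- The discrete derivative `D_i f(x) = (f(x) - f(x with i-th coordinate flipped))/2`. -/
noncomputable def cubeD (n : ℕ) (i : Fin n) (f : (Fin n → Bool) → ℝ) :
    (Fin n → Bool) → ℝ :=
  fun x => (f x - f (Function.update x i (! x i))) / 2

/-- The `q`-norm `‖f‖_q = (E|f|^q)^{1/q}` on the uniform cube. -/
noncomputable def cubeNorm (n : ℕ) (q : ℝ) (f : (Fin n → Bool) → ℝ) : ℝ :=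
  (cubeE n fun x => |f x| ^ q) ^ (1 / q)

/-!
Write `P_t = T_{e^{-t}}` for the noise semigroup. Since `P_t` multiplies `f̂(S)` by
`e^{-t|S|}`, `E (P_t f)² = ∑ f̂(S)² e^{-2t|S|}`, and as `D_i f` keeps exactly the
coefficients with `i ∈ S`, its derivative is `-2 ∑ᵢ E (P_t D_i f)²`. Integrating over
`[0, 1/k]`, and using that `f` has no Fourier weight below level `k` so that
`E (P_{1/k} f)² ≤ e^{-2} E f²`, gives `(1 - e^{-2}) E f² ≤ 2 ∫₀^{1/k} ∑ᵢ E (P_t D_i f)² dt`.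
Each integrand is then bounded by hypercontractivity, `‖T_ρ g‖₂ ≤ ‖g‖_{1+ρ²}`, which follows
by induction on the dimension from Bonami's two-point inequality and Minkowski's inequality.
-/

namespace BooleanCube

open Finset Real

variable {n : ℕ}

lemma cubeE_congr {f g : (Fin n → Bool) → ℝ} (h : ∀ x, f x = g x) : cubeE n f = cubeE n g :=
  congrArg _ (funext h)

lemma cubeE_add (f g : (Fin n → Bool) → ℝ) :
    cubeE n (fun x => f x + g x) = cubeE n f + cubeE n g := by
  rw [cubeE, cubeE, cubeE, sum_add_distrib, add_div]

lemma cubeE_const_mul (c : ℝ) (f : (Fin n → Bool) → ℝ) :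
    cubeE n (fun x => c * f x) = c * cubeE n f := by
  rw [cubeE, cubeE, ← mul_sum, mul_div_assoc]

lemma cubeE_sum {ι : Type*} (s : Finset ι) (f : ι → (Fin n → Bool) → ℝ) :
    cubeE n (fun x => ∑ a ∈ s, f a x) = ∑ a ∈ s, cubeE n (f a) := by
  rw [cubeE, sum_comm, sum_div]; rfl

lemma cubeE_mono {f g : (Fin n → Bool) → ℝ} (h : ∀ x, f x ≤ g x) : cubeE n f ≤ cubeE n g :=
  div_le_div_of_nonneg_right (sum_le_sum fun x _ => h x) (by positivity)

lemma cubeE_nonneg {f : (Fin n → Bool) → ℝ} (h : ∀ x, 0 ≤ f x) : 0 ≤ cubeE n f :=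
  div_nonneg (sum_nonneg fun x _ => h x) (by positivity)

lemma cubeE_zero (f : (Fin 0 → Bool) → ℝ) (x : Fin 0 → Bool) : cubeE 0 f = f x := by
  simp [cubeE, Subsingleton.elim _ x]

lemma cubeE_succ (f : (Fin (n + 1) → Bool) → ℝ) :
    cubeE (n + 1) f =
      (cubeE n (fun y => f (Fin.cons false y)) + cubeE n (fun y => f (Fin.cons true y))) / 2 := by
  rw [cubeE, ← (Fin.consEquiv fun _ => Bool).sum_comp, Fintype.sum_prod_type, Fintype.sum_bool,
    cubeE, cubeE, pow_succ]
  dsimp only [Fin.consEquiv, Equiv.coe_fn_mk]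
  ring

def chi (b : Bool) : ℝ := if b then 1 else -1

lemma chi_mul_self (b : Bool) : chi b * chi b = 1 := by cases b <;> norm_num [chi]

def walsh (S : Finset (Fin n)) (x : Fin n → Bool) : ℝ := ∏ i ∈ S, chi (x i)

lemma cubeCoeff_eq_cubeE_mul_walsh (f : (Fin n → Bool) → ℝ) (S : Finset (Fin n)) :
    cubeCoeff n f S = cubeE n fun x => f x * walsh S x := rfl

lemma walsh_mul_self (S : Finset (Fin n)) (x : Fin n → Bool) : walsh S x * walsh S x = 1 := by
  rw [walsh, ← prod_mul_distrib]
  exact prod_eq_one fun i _ => chi_mul_self _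

def flipAt (i : Fin n) (x : Fin n → Bool) : Fin n → Bool := Function.update x i (!x i)

lemma flipAt_involutive (i : Fin n) : Function.Involutive (flipAt i) := by
  intro x
  ext j
  rcases eq_or_ne j i with rfl | h
  · simp [flipAt]
  · simp [flipAt, Function.update_of_ne h]

lemma sum_comp_flipAt (i : Fin n) (f : (Fin n → Bool) → ℝ) : ∑ x, f (flipAt i x) = ∑ x, f x :=
  Equiv.sum_comp (flipAt_involutive i).toPerm f

lemma walsh_flipAt (S : Finset (Fin n)) (i : Fin n) (x : Fin n → Bool) :
    walsh S (flipAt i x) = (if i ∈ S then -1 else 1) * walsh S x := by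
  have hne : ∀ j ∈ S.erase i, chi (flipAt i x j) = chi (x j) := fun j hj => by
    simp [flipAt, Function.update_of_ne (ne_of_mem_erase hj)]
  split_ifs with h
  · rw [walsh, walsh, ← mul_prod_erase _ _ h, ← mul_prod_erase _ _ h, prod_congr rfl hne]
    cases hx : x i <;> simp [flipAt, chi, hx]
  · rw [one_mul, walsh, walsh, ← erase_eq_of_notMem h, prod_congr rfl hne]

lemma sum_eq_zero_of_flipAt (i : Fin n) {f : (Fin n → Bool) → ℝ}
    (h : ∀ x, f (flipAt i x) = -f x) : ∑ x, f x = 0 := by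
  have : ∑ x, f x = -∑ x, f x := by
    conv_lhs => rw [← sum_comp_flipAt i f]
    rw [← sum_neg_distrib]
    exact sum_congr rfl fun x _ => h x
  linarith

lemma cubeE_walsh_mul_walsh (S T : Finset (Fin n)) :
    cubeE n (fun x => walsh S x * walsh T x) = if S = T then 1 else 0 := by
  split_ifs with h
  · subst h
    simp [walsh_mul_self, cubeE]
  · obtain ⟨i, hi⟩ : ∃ i, ¬(i ∈ S ↔ i ∈ T) := by
      by_contra! hc
      exact h (ext hc)
    rw [cubeE, sum_eq_zero_of_flipAt i fun x => ?_, zero_div]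
    rw [walsh_flipAt, walsh_flipAt]
    by_cases hS : i ∈ S <;> by_cases hT : i ∈ T <;> simp_all

def noiseKernel (ρ : ℝ) (x y : Fin n → Bool) : ℝ := ∏ i, (1 + ρ * (chi (x i) * chi (y i)))

/-- The noise operator `T_ρ`; the semigroup of the paper is `P_t = T_{e^{-t}}`. -/
noncomputable def noiseOp (ρ : ℝ) (f : (Fin n → Bool) → ℝ) (x : Fin n → Bool) : ℝ :=
  cubeE n fun y => noiseKernel ρ x y * f y

lemma noiseKernel_eq_sum_walsh (ρ : ℝ) (x y : Fin n → Bool) :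
    noiseKernel ρ x y = ∑ S, ρ ^ S.card * (walsh S x * walsh S y) := by
  simp_rw [noiseKernel, add_comm (1 : ℝ)]
  rw [prod_add, powerset_univ]
  refine sum_congr rfl fun S _ => ?_
  rw [prod_const_one, mul_one, prod_mul_distrib, prod_const, walsh, walsh, prod_mul_distrib]

lemma noiseKernel_one (x y : Fin n → Bool) :
    noiseKernel 1 x y = if x = y then 2 ^ n else 0 := by
  split_ifs with h
  · subst h
    simp [noiseKernel, chi_mul_self, one_add_one_eq_two]
  · obtain ⟨i, hi⟩ : ∃ i, x i ≠ y i := Function.ne_iff.mp h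
    refine prod_eq_zero (mem_univ i) ?_
    cases hx : x i <;> cases hy : y i <;> simp_all [chi]

lemma noiseOp_one (f : (Fin n → Bool) → ℝ) : noiseOp 1 f = f := by
  ext x
  simp [noiseOp, noiseKernel_one, cubeE, ite_mul]

lemma noiseOp_eq_sum_walsh (ρ : ℝ) (f : (Fin n → Bool) → ℝ) (x : Fin n → Bool) :
    noiseOp ρ f x = ∑ S, ρ ^ S.card * cubeCoeff n f S * walsh S x := by
  simp only [noiseOp, noiseKernel_eq_sum_walsh, sum_mul, cubeE_sum,
    cubeCoeff_eq_cubeE_mul_walsh]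
  refine sum_congr rfl fun S _ => ?_
  rw [mul_assoc, mul_comm (cubeE n _), ← cubeE_const_mul, ← cubeE_const_mul]
  exact cubeE_congr fun y => by ring

lemma sum_cubeCoeff_mul_walsh (f : (Fin n → Bool) → ℝ) (x : Fin n → Bool) :
    ∑ S, cubeCoeff n f S * walsh S x = f x := by
  simpa using (noiseOp_eq_sum_walsh 1 f x).symm.trans (congrFun (noiseOp_one f) x)

lemma cubeCoeff_sum_walsh (c : Finset (Fin n) → ℝ) (S : Finset (Fin n)) :
    cubeCoeff n (fun x => ∑ T, c T * walsh T x) S = c S := by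
  simp only [cubeCoeff_eq_cubeE_mul_walsh, sum_mul, mul_assoc, cubeE_sum, cubeE_const_mul,
    cubeE_walsh_mul_walsh]
  simp

lemma cubeCoeff_noiseOp (ρ : ℝ) (f : (Fin n → Bool) → ℝ) (S : Finset (Fin n)) :
    cubeCoeff n (noiseOp ρ f) S = ρ ^ S.card * cubeCoeff n f S := by
  rw [funext (noiseOp_eq_sum_walsh ρ f), cubeCoeff_sum_walsh]

lemma cubeE_sq_eq_sum_sq_cubeCoeff (f : (Fin n → Bool) → ℝ) :
    cubeE n (fun x => f x ^ 2) = ∑ S, cubeCoeff n f S ^ 2 := by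
  calc cubeE n (fun x => f x ^ 2)
      = cubeE n (fun x => ∑ S, cubeCoeff n f S * (f x * walsh S x)) := cubeE_congr fun x => by
        rw [sq]
        nth_rw 1 [← sum_cubeCoeff_mul_walsh f x]
        rw [sum_mul]
        exact sum_congr rfl fun S _ => by ring
    _ = ∑ S, cubeCoeff n f S ^ 2 := by
        simp only [cubeE_sum, cubeE_const_mul, ← cubeCoeff_eq_cubeE_mul_walsh, sq]

lemma cubeE_sq_noiseOp (ρ : ℝ) (f : (Fin n → Bool) → ℝ) :
    cubeE n (fun x => noiseOp ρ f x ^ 2) = ∑ S, ρ ^ (2 * S.card) * cubeCoeff n f S ^ 2 := by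
  simp only [cubeE_sq_eq_sum_sq_cubeCoeff, cubeCoeff_noiseOp, mul_pow, pow_mul']

lemma cubeCoeff_cubeD (i : Fin n) (f : (Fin n → Bool) → ℝ) (S : Finset (Fin n)) :
    cubeCoeff n (cubeD n i f) S = if i ∈ S then cubeCoeff n f S else 0 := by
  have hflip : ∑ x, f (flipAt i x) * walsh S x =
      (if i ∈ S then -1 else 1) * ∑ x, f x * walsh S x := by
    rw [← sum_comp_flipAt i, mul_sum]
    exact sum_congr rfl fun x _ => by rw [flipAt_involutive i x, walsh_flipAt]; ring
  have hsplit : ∑ x, cubeD n i f x * walsh S x =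
      (∑ x, f x * walsh S x - ∑ x, f (flipAt i x) * walsh S x) / 2 := by
    rw [← sum_sub_distrib, sum_div]
    exact sum_congr rfl fun x _ => by simp only [cubeD, flipAt]; ring
  simp only [cubeCoeff_eq_cubeE_mul_walsh, cubeE, hsplit, hflip]
  split_ifs <;> ring

lemma sum_cubeE_sq_noiseOp_cubeD (ρ : ℝ) (f : (Fin n → Bool) → ℝ) :
    ∑ i, cubeE n (fun x => noiseOp ρ (cubeD n i f) x ^ 2) =
      ∑ S, (S.card : ℝ) * (ρ ^ (2 * S.card) * cubeCoeff n f S ^ 2) := by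
  simp only [cubeE_sq_noiseOp, cubeCoeff_cubeD]
  rw [sum_comm]
  refine sum_congr rfl fun S _ => ?_
  simp [sum_ite_mem]

lemma hasDerivAt_cubeE_sq_noiseOp_exp (f : (Fin n → Bool) → ℝ) (t : ℝ) :
    HasDerivAt (fun t => cubeE n fun x => noiseOp (exp (-t)) f x ^ 2)
      (-(2 * ∑ i, cubeE n fun x => noiseOp (exp (-t)) (cubeD n i f) x ^ 2)) t := by
  rw [sum_cubeE_sq_noiseOp_cubeD]
  simp only [cubeE_sq_noiseOp, mul_sum, ← sum_neg_distrib, ← exp_nat_mul]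
  refine HasDerivAt.fun_sum fun S _ => ?_
  exact ((((hasDerivAt_neg (𝕜 := ℝ) t).const_mul ((2 * S.card : ℕ) : ℝ)).exp).mul_const
    (cubeCoeff n f S ^ 2)).congr_deriv (by push_cast; ring)

lemma continuous_sum_cubeE_sq_noiseOp_exp_cubeD (f : (Fin n → Bool) → ℝ) :
    Continuous fun t =>
      ∑ i, cubeE n fun x => noiseOp (exp (-t)) (cubeD n i f) x ^ 2 := by
  simp only [sum_cubeE_sq_noiseOp_cubeD]
  fun_prop

lemma cubeE_sq_sub_cubeE_sq_noiseOp_exp (f : (Fin n → Bool) → ℝ) (s : ℝ) :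
    cubeE n (fun x => f x ^ 2) - cubeE n (fun x => noiseOp (exp (-s)) f x ^ 2) =
      ∫ t in (0 : ℝ)..s,
        2 * ∑ i, cubeE n fun x => noiseOp (exp (-t)) (cubeD n i f) x ^ 2 := by
  have hFTC := intervalIntegral.integral_eq_sub_of_hasDerivAt
    (fun t _ => hasDerivAt_cubeE_sq_noiseOp_exp f t)
    ((continuous_const.mul (continuous_sum_cubeE_sq_noiseOp_exp_cubeD f)).neg.intervalIntegrable
      0 s)
  rw [intervalIntegral.integral_neg, neg_zero, exp_zero, noiseOp_one] at hFTC
  linarith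

lemma cubeE_sq_noiseOp_exp_le_of_cubeCoeff_eq_zero {k : ℕ} (hk : 0 < k)
    {f : (Fin n → Bool) → ℝ} (hf : ∀ S : Finset (Fin n), S.card < k → cubeCoeff n f S = 0) :
    cubeE n (fun x => noiseOp (exp (-(1 / k))) f x ^ 2) ≤
      exp (-2) * cubeE n (fun x => f x ^ 2) := by
  rw [cubeE_sq_noiseOp, cubeE_sq_eq_sum_sq_cubeCoeff, mul_sum]
  refine sum_le_sum fun S _ => ?_
  rcases lt_or_ge S.card k with hS | hS
  · simp [hf S hS]
  · rw [← exp_nat_mul]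
    gcongr
    have : (k : ℝ) ≤ S.card := by exact_mod_cast hS
    rw [Nat.cast_mul, Nat.cast_ofNat, mul_neg, neg_le_neg_iff, ← mul_div_assoc, mul_one,
      le_div_iff₀ (by positivity)]
    linarith

lemma two_le_rpow_add_rpow {u v p : ℝ} (hu : 0 < u) (hv : 0 < v) (huv : u * v ≤ 1)
    (hp : p ≤ 0) : 2 ≤ u ^ p + v ^ p := by
  have hprod : 1 ≤ u ^ p * v ^ p := by
    rw [← mul_rpow hu.le hv.le]
    exact one_le_rpow_of_pos_of_le_one_of_nonpos (by positivity) huv hp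
  nlinarith [sq_nonneg (u ^ p - v ^ p), rpow_pos_of_pos hu p, rpow_pos_of_pos hv p]

lemma two_mul_mul_le_one_add_rpow_sub_one_sub_rpow {p t : ℝ} (hp0 : 0 ≤ p) (hp1 : p ≤ 1)
    (ht0 : 0 ≤ t) (ht1 : t < 1) : 2 * p * t ≤ (1 + t) ^ p - (1 - t) ^ p := by
  let g : ℝ → ℝ := fun s => (1 + s) ^ p - (1 - s) ^ p - 2 * p * s
  have hg : MonotoneOn g (Set.Icc 0 t) := by
    refine monotoneOn_of_hasDerivWithinAt_nonneg (convex_Icc 0 t)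
      (f' := fun s => p * (1 + s) ^ (p - 1) + p * (1 - s) ^ (p - 1) - 2 * p)
      (by fun_prop (disch := assumption)) (fun s hs => ?_) (fun s hs => ?_)
    · rw [interior_Icc] at hs
      have h1 := ((hasDerivAt_id' s).const_add 1).rpow_const (p := p)
        (Or.inl (by linarith [hs.1]))
      have h2 := ((hasDerivAt_id' s).const_sub 1).rpow_const (p := p)
        (Or.inl (by linarith [hs.2]))
      have h3 := (hasDerivAt_id' s).const_mul (2 * p)
      exact ((h1.sub h2).sub h3).hasDerivWithinAt.congr_deriv (by ring)
    · rw [interior_Icc] at hs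
      have := two_le_rpow_add_rpow (u := 1 + s) (v := 1 - s) (p := p - 1)
        (by linarith [hs.1]) (by linarith [hs.2]) (by nlinarith [hs.1]) (by linarith)
      nlinarith
  have := hg ⟨le_rfl, ht0⟩ ⟨ht0, le_rfl⟩ ht0
  simp only [g, add_zero, sub_zero, one_rpow, mul_zero] at this
  linarith

lemma two_add_mul_sq_le_one_add_rpow_add_one_sub_rpow {q x : ℝ} (hq1 : 1 ≤ q) (hq2 : q ≤ 2)
    (hx0 : 0 ≤ x) (hx1 : x ≤ 1) : 2 + q * (q - 1) * x ^ 2 ≤ (1 + x) ^ q + (1 - x) ^ q := by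
  let g : ℝ → ℝ := fun s => (1 + s) ^ q + (1 - s) ^ q - q * (q - 1) * s ^ 2
  have hg : MonotoneOn g (Set.Icc 0 1) := by
    refine monotoneOn_of_hasDerivWithinAt_nonneg (convex_Icc 0 1)
      (f' := fun s => q * (1 + s) ^ (q - 1) - q * (1 - s) ^ (q - 1) - 2 * q * (q - 1) * s)
      (by fun_prop (disch := linarith)) (fun s _ => ?_) (fun s hs => ?_)
    · have h1 := ((hasDerivAt_id' s).const_add 1).rpow_const (p := q) (Or.inr hq1)
      have h2 := ((hasDerivAt_id' s).const_sub 1).rpow_const (p := q) (Or.inr hq1)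
      have h3 := (hasDerivAt_pow 2 s).const_mul (q * (q - 1))
      exact ((h1.add h2).sub h3).hasDerivWithinAt.congr_deriv (by norm_num; ring)
    · rw [interior_Icc] at hs
      have := two_mul_mul_le_one_add_rpow_sub_one_sub_rpow (p := q - 1) (by linarith)
        (by linarith) hs.1.le hs.2
      nlinarith
  have := hg ⟨le_rfl, zero_le_one⟩ ⟨hx0, hx1⟩ hx0
  simp only [g, add_zero, sub_zero, one_rpow] at this
  linarith

lemma abs_rpow_rpow_two_div {q : ℝ} (hq : q ≠ 0) (a : ℝ) : (|a| ^ q) ^ (2 / q) = a ^ 2 := by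
  rw [← rpow_mul (abs_nonneg a), mul_div_cancel₀ _ hq, rpow_two, sq_abs]

lemma one_add_mul_sq_le_rpow_two_point {q x : ℝ} (hq1 : 1 ≤ q) (hq2 : q ≤ 2) (hx : |x| ≤ 1) :
    1 + (q - 1) * x ^ 2 ≤ (((1 + x) ^ q + (1 - x) ^ q) / 2) ^ (2 / q) := by
  have hsymm : (1 + |x|) ^ q + (1 - |x|) ^ q = (1 + x) ^ q + (1 - x) ^ q := by
    rcases abs_choice x with h | h <;> rw [h]
    rw [sub_neg_eq_add, ← sub_eq_add_neg, add_comm]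
  have hmean : (1 + (q - 1) * x ^ 2) ^ (q / 2) ≤ ((1 + x) ^ q + (1 - x) ^ q) / 2 := by
    have hbern := rpow_one_add_le_one_add_mul_self (s := (q - 1) * x ^ 2) (by nlinarith)
      (p := q / 2) (by linarith) (by linarith)
    have hcurv := two_add_mul_sq_le_one_add_rpow_add_one_sub_rpow hq1 hq2 (abs_nonneg x) hx
    rw [hsymm, sq_abs] at hcurv
    linarith
  have hbase : 0 ≤ 1 + (q - 1) * x ^ 2 := by nlinarith
  calc 1 + (q - 1) * x ^ 2 = ((1 + (q - 1) * x ^ 2) ^ (q / 2)) ^ (2 / q) := by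
        rw [← rpow_mul hbase, show q / 2 * (2 / q) = 1 by field_simp, rpow_one]
    _ ≤ _ := rpow_le_rpow (by positivity) hmean (by positivity)

lemma bonami_two_point_of_abs_le {q : ℝ} (hq1 : 1 ≤ q) (hq2 : q ≤ 2) {a b : ℝ}
    (hba : |b| ≤ |a|) :
    a ^ 2 + (q - 1) * b ^ 2 ≤ ((|a + b| ^ q + |a - b| ^ q) / 2) ^ (2 / q) := by
  rcases eq_or_ne a 0 with rfl | ha
  · obtain rfl : b = 0 := abs_nonpos_iff.mp (by simpa using hba)
    simp [zero_rpow (show q ≠ 0 by positivity), rpow_nonneg]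
  obtain ⟨x, rfl⟩ : ∃ x, b = a * x := ⟨b / a, by field_simp⟩
  have hx : |x| ≤ 1 := by
    rwa [abs_mul, mul_le_iff_le_one_right (abs_pos.mpr ha)] at hba
  have habs : ∀ y : ℝ, |y| ≤ 1 → |a + a * y| ^ q = |a| ^ q * (1 + y) ^ q := fun y hy => by
    rw [← mul_one_add, abs_mul, abs_of_nonneg (a := 1 + y) (by linarith [neg_abs_le y]),
      mul_rpow (abs_nonneg a) (by linarith [neg_abs_le y])]
  have hmean : (|a + a * x| ^ q + |a - a * x| ^ q) / 2 =
      |a| ^ q * (((1 + x) ^ q + (1 - x) ^ q) / 2) := by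
    rw [sub_eq_add_neg, ← mul_neg, habs x hx, habs (-x) (by rwa [abs_neg]), ← sub_eq_add_neg]
    ring
  have hmean_nonneg : 0 ≤ ((1 + x) ^ q + (1 - x) ^ q) / 2 := by
    have := abs_le.mp hx
    have := rpow_nonneg (show 0 ≤ 1 + x by linarith) q
    have := rpow_nonneg (show 0 ≤ 1 - x by linarith) q
    positivity
  rw [hmean, mul_rpow (by positivity) hmean_nonneg, abs_rpow_rpow_two_div (by positivity),
    mul_pow, ← mul_assoc, mul_comm (q - 1), mul_assoc, ← mul_one_add]
  exact mul_le_mul_of_nonneg_left (one_add_mul_sq_le_rpow_two_point hq1 hq2 hx) (sq_nonneg a)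

lemma bonami_two_point {q : ℝ} (hq1 : 1 ≤ q) (hq2 : q ≤ 2) (a b : ℝ) :
    a ^ 2 + (q - 1) * b ^ 2 ≤ ((|a + b| ^ q + |a - b| ^ q) / 2) ^ (2 / q) := by
  rcases le_total |b| |a| with hba | hab
  · exact bonami_two_point_of_abs_le hq1 hq2 hba
  · -- swapping `a` and `b` fixes the right side and, as `q ≤ 2`, does not decrease the left
    have h := bonami_two_point_of_abs_le hq1 hq2 hab
    rw [add_comm b, abs_sub_comm] at h
    have : a ^ 2 ≤ b ^ 2 := sq_le_sq.mpr hab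
    nlinarith

lemma cubeNorm_nonneg (q : ℝ) (f : (Fin n → Bool) → ℝ) : 0 ≤ cubeNorm n q f :=
  rpow_nonneg (cubeE_nonneg fun x => by positivity) _

lemma cubeNorm_add_le {r : ℝ} (hr : 1 ≤ r) (u v : (Fin n → Bool) → ℝ) :
    cubeNorm n r (fun x => u x + v x) ≤ cubeNorm n r u + cubeNorm n r v := by
  have hscale : ∀ w : (Fin n → Bool) → ℝ,
      cubeNorm n r w = (∑ x, |w x| ^ r) ^ (1 / r) / (2 ^ n : ℝ) ^ (1 / r) := fun w =>
    div_rpow (sum_nonneg fun x _ => by positivity) (by positivity) _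
  rw [hscale, hscale, hscale, ← add_div]
  exact div_le_div_of_nonneg_right (Lp_add_le univ u v hr) (by positivity)

lemma cubeNorm_const_mul {r : ℝ} (hr : 0 < r) (c : ℝ) (u : (Fin n → Bool) → ℝ) :
    cubeNorm n r (fun x => c * u x) = |c| * cubeNorm n r u := by
  simp only [cubeNorm, abs_mul, mul_rpow (abs_nonneg c) (abs_nonneg _), cubeE_const_mul]
  rw [mul_rpow (by positivity) (cubeE_nonneg fun x => by positivity), ← rpow_mul (abs_nonneg c),
    mul_one_div_cancel hr.ne', rpow_one]

lemma cubeNorm_rpow {r : ℝ} (hr : 0 < r) {u : (Fin n → Bool) → ℝ} (hu : ∀ x, 0 ≤ u x) :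
    cubeNorm n r u ^ r = cubeE n fun x => u x ^ r := by
  rw [cubeNorm, ← rpow_mul (cubeE_nonneg fun x => by positivity), one_div_mul_cancel hr.ne',
    rpow_one]
  exact cubeE_congr fun x => by rw [abs_of_nonneg (hu x)]

lemma cubeE_rpow_midpoint_le {r : ℝ} (hr : 1 ≤ r) {u v : (Fin n → Bool) → ℝ}
    (hu : ∀ x, 0 ≤ u x) (hv : ∀ x, 0 ≤ v x) :
    cubeE n (fun x => ((u x + v x) / 2) ^ r) ≤ ((cubeNorm n r u + cubeNorm n r v) / 2) ^ r := by
  have hr0 : 0 < r := by linarith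
  have hmid :
      cubeNorm n r (fun x => (u x + v x) / 2) ≤ (cubeNorm n r u + cubeNorm n r v) / 2 := by
    simp_rw [div_eq_inv_mul _ (2 : ℝ)]
    rw [cubeNorm_const_mul hr0, abs_of_pos (by norm_num)]
    exact mul_le_mul_of_nonneg_left (cubeNorm_add_le hr u v) (by norm_num)
  rw [← cubeNorm_rpow hr0 fun x => by linarith [hu x, hv x]]
  exact rpow_le_rpow (cubeNorm_nonneg _ _) hmid hr0.le

lemma noiseKernel_cons (ρ : ℝ) (b c : Bool) (y z : Fin n → Bool) :
    noiseKernel ρ (Fin.cons b y : Fin (n + 1) → Bool) (Fin.cons c z) =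
      (1 + ρ * (chi b * chi c)) * noiseKernel ρ y z := by
  simp [noiseKernel, Fin.prod_univ_succ]

lemma noiseOp_cons (ρ : ℝ) (f : (Fin (n + 1) → Bool) → ℝ) (b : Bool) (y : Fin n → Bool) :
    noiseOp ρ f (Fin.cons b y) =
      (noiseOp ρ (fun z => f (Fin.cons true z)) y
        + noiseOp ρ (fun z => f (Fin.cons false z)) y) / 2
      + ρ * chi b * ((noiseOp ρ (fun z => f (Fin.cons true z)) y
        - noiseOp ρ (fun z => f (Fin.cons false z)) y) / 2) := by
  simp only [noiseOp, cubeE_succ, noiseKernel_cons, mul_assoc, cubeE_const_mul]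
  cases b <;> simp only [chi] <;> norm_num <;> ring

lemma cubeE_sq_noiseOp_succ (ρ : ℝ) (f : (Fin (n + 1) → Bool) → ℝ) :
    cubeE (n + 1) (fun x => noiseOp ρ f x ^ 2) =
      cubeE n fun y =>
        ((noiseOp ρ (fun z => f (Fin.cons true z)) y
          + noiseOp ρ (fun z => f (Fin.cons false z)) y) / 2) ^ 2
        + ρ ^ 2 * ((noiseOp ρ (fun z => f (Fin.cons true z)) y
          - noiseOp ρ (fun z => f (Fin.cons false z)) y) / 2) ^ 2 := by
  simp only [cubeE_succ, noiseOp_cons, chi]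
  rw [← cubeE_add, div_eq_inv_mul, ← cubeE_const_mul]
  exact cubeE_congr fun y => by norm_num; ring

theorem cubeE_sq_noiseOp_le {ρ : ℝ} (h0 : 0 ≤ ρ) (h1 : ρ ≤ 1) (f : (Fin n → Bool) → ℝ) :
    cubeE n (fun x => noiseOp ρ f x ^ 2) ≤
      (cubeE n fun x => |f x| ^ (1 + ρ ^ 2)) ^ (2 / (1 + ρ ^ 2)) := by
  set q := 1 + ρ ^ 2 with hq
  have hq1 : 1 ≤ q := by nlinarith
  have hq2 : q ≤ 2 := by nlinarith
  have hq0 : 0 < q := by linarith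
  induction n with
  | zero =>
    let x : Fin 0 → Bool := default
    have hT : noiseOp ρ f x = f x := by simp [noiseOp, cubeE_zero _ x, noiseKernel]
    rw [cubeE_zero _ x, cubeE_zero _ x, hT, abs_rpow_rpow_two_div hq0.ne']
  | succ n ih =>
    set f₁ : (Fin n → Bool) → ℝ := fun z => f (Fin.cons true z)
    set f₀ : (Fin n → Bool) → ℝ := fun z => f (Fin.cons false z)
    have hslice : ∀ g : (Fin n → Bool) → ℝ,
        cubeNorm n (2 / q) (fun y => |noiseOp ρ g y| ^ q) ≤ cubeE n fun y => |g y| ^ q := by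
      intro g
      have hM := cubeE_nonneg fun y => rpow_nonneg (abs_nonneg (g y)) q
      calc cubeNorm n (2 / q) (fun y => |noiseOp ρ g y| ^ q)
          = (cubeE n fun y => noiseOp ρ g y ^ 2) ^ (q / 2) := by
            rw [cubeNorm, one_div_div]
            simp only [abs_of_nonneg (rpow_nonneg (abs_nonneg _) q),
              abs_rpow_rpow_two_div hq0.ne']
        _ ≤ ((cubeE n fun y => |g y| ^ q) ^ (2 / q)) ^ (q / 2) :=
            rpow_le_rpow (cubeE_nonneg fun y => sq_nonneg _) (ih g) (by positivity)
        _ = cubeE n fun y => |g y| ^ q := by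
            rw [← rpow_mul hM, show 2 / q * (q / 2) = 1 by field_simp, rpow_one]
    calc cubeE (n + 1) (fun x => noiseOp ρ f x ^ 2)
        = cubeE n fun y => ((noiseOp ρ f₁ y + noiseOp ρ f₀ y) / 2) ^ 2
            + (q - 1) * ((noiseOp ρ f₁ y - noiseOp ρ f₀ y) / 2) ^ 2 := by
          rw [cubeE_sq_noiseOp_succ, hq, add_sub_cancel_left]
      _ ≤ cubeE n fun y => ((|noiseOp ρ f₁ y| ^ q + |noiseOp ρ f₀ y| ^ q) / 2) ^ (2 / q) :=
          cubeE_mono fun y => by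
            have h := bonami_two_point hq1 hq2 ((noiseOp ρ f₁ y + noiseOp ρ f₀ y) / 2)
              ((noiseOp ρ f₁ y - noiseOp ρ f₀ y) / 2)
            rwa [show ∀ u v : ℝ, (u + v) / 2 + (u - v) / 2 = u from fun u v => by ring,
              show ∀ u v : ℝ, (u + v) / 2 - (u - v) / 2 = v from fun u v => by ring] at h
      _ ≤ ((cubeNorm n (2 / q) (fun y => |noiseOp ρ f₁ y| ^ q)
            + cubeNorm n (2 / q) (fun y => |noiseOp ρ f₀ y| ^ q)) / 2) ^ (2 / q) :=
          cubeE_rpow_midpoint_le (by rw [le_div_iff₀ hq0]; linarith)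
            (fun y => by positivity) (fun y => by positivity)
      _ ≤ ((cubeE n (fun y => |f₁ y| ^ q) + cubeE n fun y => |f₀ y| ^ q) / 2) ^ (2 / q) := by
          gcongr
          · exact div_nonneg (add_nonneg (cubeNorm_nonneg _ _) (cubeNorm_nonneg _ _))
              zero_le_two
          · exact hslice f₁
          · exact hslice f₀
      _ = (cubeE (n + 1) fun x => |f x| ^ q) ^ (2 / q) := by
          rw [cubeE_succ, add_comm]

lemma cubeNorm_sq (q : ℝ) (g : (Fin n → Bool) → ℝ) :
    cubeNorm n q g ^ 2 = (cubeE n fun x => |g x| ^ q) ^ (2 / q) := by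
  rw [cubeNorm, ← rpow_natCast, ← rpow_mul (cubeE_nonneg fun x => by positivity)]
  congr 1
  push_cast
  ring

lemma cubeE_sq_noiseOp_exp_le {t : ℝ} (ht : 0 ≤ t) (g : (Fin n → Bool) → ℝ) :
    cubeE n (fun x => noiseOp (exp (-t)) g x ^ 2) ≤ cubeNorm n (1 + exp (-2 * t)) g ^ 2 := by
  have hρ : exp (-t) ^ 2 = exp (-2 * t) := by
    rw [← exp_nat_mul]
    ring_nf
  have h := cubeE_sq_noiseOp_le (exp_pos (-t)).le (exp_le_one_iff.mpr (by linarith)) g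
  rwa [hρ, ← cubeNorm_sq] at h

lemma continuousOn_cubeNorm (g : (Fin n → Bool) → ℝ) :
    ContinuousOn (fun q => cubeNorm n q g) (Set.Ioi 0) := by
  have hmoment : ContinuousOn (fun q : ℝ => cubeE n fun x => |g x| ^ q) (Set.Ioi 0) :=
    (continuousOn_finsetSum _ fun x _ =>
      continuousOn_const.rpow continuousOn_id fun q hq => Or.inr hq).div_const _
  exact hmoment.rpow (continuousOn_const.div continuousOn_id fun q hq => ne_of_gt hq)
    fun q hq => Or.inr (one_div_pos.mpr (Set.mem_Ioi.mp hq))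

lemma continuous_cubeNorm_one_add_exp_sq (g : (Fin n → Bool) → ℝ) :
    Continuous fun t => cubeNorm n (1 + exp (-2 * t)) g ^ 2 :=
  ((continuousOn_cubeNorm g).comp_continuous (by fun_prop)
    fun t => Set.mem_Ioi.mpr (by positivity)).pow 2

end BooleanCube

open BooleanCube Real

theorem stmt_19 (n k : ℕ) (hk : 1 ≤ k) (f : (Fin n → Bool) → ℝ)
    (hcoeff : ∀ S : Finset (Fin n), S.card < k → cubeCoeff n f S = 0) :
    (1 - Real.exp (-2)) * cubeE n (fun x => f x ^ 2) ≤
      2 * ∑ i : Fin n,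
        ∫ t in (0 : ℝ)..(1 / (k : ℝ)),
          (cubeNorm n (1 + Real.exp (-2 * t)) (cubeD n i f)) ^ (2 : ℕ) := by
  have hnorm := fun i => continuous_cubeNorm_one_add_exp_sq (cubeD n i f)
  calc (1 - exp (-2)) * cubeE n (fun x => f x ^ 2)
      ≤ cubeE n (fun x => f x ^ 2) - cubeE n (fun x => noiseOp (exp (-(1 / k))) f x ^ 2) := by
        linarith [cubeE_sq_noiseOp_exp_le_of_cubeCoeff_eq_zero hk hcoeff]
    _ = ∫ t in (0 : ℝ)..(1 / k),
          2 * ∑ i, cubeE n fun x => noiseOp (exp (-t)) (cubeD n i f) x ^ 2 :=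
        cubeE_sq_sub_cubeE_sq_noiseOp_exp f _
    _ ≤ ∫ t in (0 : ℝ)..(1 / k), 2 * ∑ i, cubeNorm n (1 + exp (-2 * t)) (cubeD n i f) ^ 2 := by
        refine intervalIntegral.integral_mono_on (by positivity)
          ((continuous_const.mul (continuous_sum_cubeE_sq_noiseOp_exp_cubeD f)).intervalIntegrable
            _ _)
          ((continuous_const.mul (continuous_finsetSum _ fun i _ => hnorm i)).intervalIntegrable
            _ _) fun t ht => ?_
        gcongr with i
        exact cubeE_sq_noiseOp_exp_le ht.1 _
    _ = 2 * ∑ i, ∫ t in (0 : ℝ)..(1 / k), cubeNorm n (1 + exp (-2 * t)) (cubeD n i f) ^ 2 := by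
        rw [intervalIntegral.integral_const_mul,
          intervalIntegral.integral_finsetSum fun i _ => (hnorm i).intervalIntegrable _ _]
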